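/- Let d > 1 be a real number and let 0 < x ≤ y. Then I_d(y)/I_d(x) ≤ (y/x)^d · e^{y−x}, where I_d is the modified Bessel function of the first kind of order d. -/

import Mathlib

/-- The modified Bessel function of the first kind,
`I_ν(x) = ∑ (x/2)^{2m+ν} / (m! Γ(m+ν+1))` (for `x > 0`). -/
noncomputable def besselI (ν : ℝ) (x : ℝ) : ℝ :=
  ∑' m : ℕ, (x / 2) ^ (2 * (m : ℝ) + ν) / ((Nat.factorial m : ℝ) * Real.Gamma ((m : ℝ) + ν + 1))

namespace Stmt14Aux

/-- Coefficients of the series `x^{-d} I_d(x)` (up to the factor `2^d`). -/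
noncomputable def bc (d : ℝ) (m : ℕ) : ℝ :=
  1 / (4 ^ m * (Nat.factorial m : ℝ) * Real.Gamma ((m : ℝ) + d + 1))

lemma gamma_pos {d : ℝ} (hd : 0 < d) (m : ℕ) : 0 < Real.Gamma ((m : ℝ) + d + 1) :=
  Real.Gamma_pos_of_pos (by positivity)

lemma bc_pos {d : ℝ} (hd : 0 < d) (m : ℕ) : 0 < bc d m := by
  have h1 := gamma_pos hd m
  have h2 : (0:ℝ) < (Nat.factorial m : ℝ) := by exact_mod_cast Nat.factorial_pos m
  unfold bc; positivity

lemma gamma_ge {d : ℝ} (hd : 0 < d) (m : ℕ) :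
    Real.Gamma (d + 1) ≤ Real.Gamma ((m : ℝ) + d + 1) := by
  induction m with
  | zero => simp
  | succ k ih =>
    have hk : ((k:ℝ) + d + 1) ≠ 0 := by positivity
    have : ((k+1:ℕ):ℝ) + d + 1 = ((k:ℝ) + d + 1) + 1 := by push_cast; ring
    rw [this, Real.Gamma_add_one hk]
    nlinarith [gamma_pos hd k, ih]

lemma bc_le {d : ℝ} (hd : 0 < d) (m : ℕ) :
    bc d m ≤ (1 / Real.Gamma (d+1)) * ((1/4) ^ m / (Nat.factorial m : ℝ)) := by
  have h1 := gamma_pos hd m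
  have h1' := gamma_ge hd m
  have h0 : (0:ℝ) < Real.Gamma (d+1) := Real.Gamma_pos_of_pos (by positivity)
  have h2 : (0:ℝ) < (Nat.factorial m : ℝ) := by exact_mod_cast Nat.factorial_pos m
  unfold bc
  rw [div_le_iff₀ (by positivity)]
  have e : (1 / Real.Gamma (d+1)) * ((1/4) ^ m / (Nat.factorial m : ℝ)) *
      (4 ^ m * (Nat.factorial m : ℝ) * Real.Gamma ((m : ℝ) + d + 1)) =
      Real.Gamma ((m : ℝ) + d + 1) / Real.Gamma (d+1) * ((1/4)^m * 4^m) := by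
    field_simp
  rw [e]
  have h4 : ((1:ℝ)/4)^m * 4^m = 1 := by rw [← mul_pow]; norm_num
  rw [h4, mul_one, le_div_iff₀ h0]
  linarith

lemma bc_succ {d : ℝ} (hd : 0 < d) (k : ℕ) :
    bc d (k+1) * (4 * ((k:ℝ)+1) * ((k:ℝ) + d + 1)) = bc d k := by
  have h1 := gamma_pos hd k
  have h2 : (0:ℝ) < (Nat.factorial k : ℝ) := by exact_mod_cast Nat.factorial_pos k
  have hk : ((k:ℝ) + d + 1) ≠ 0 := by positivity
  unfold bc
  have e1 : ((k+1:ℕ):ℝ) + d + 1 = ((k:ℝ) + d + 1) + 1 := by push_cast; ring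
  rw [e1, Real.Gamma_add_one hk]
  have e2 : ((Nat.factorial (k+1) : ℕ):ℝ) = ((k:ℝ)+1) * (Nat.factorial k : ℝ) := by
    rw [Nat.factorial_succ]; push_cast; ring
  rw [e2]
  field_simp
  ring

/-- `F d t = ∑ c_m t^{2m}`, so that `besselI d t = (t/2)^d * F d t` for `t > 0`. -/
noncomputable def F (d : ℝ) (t : ℝ) : ℝ := ∑' m : ℕ, bc d m * t ^ (2*m)

noncomputable def F' (d : ℝ) (t : ℝ) : ℝ :=
  ∑' m : ℕ, bc d m * (((2*m : ℕ):ℝ) * t ^ (2*m-1))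

lemma term_nonneg {d : ℝ} (hd : 0 < d) (t : ℝ) (m : ℕ) : 0 ≤ bc d m * t ^ (2*m) := by
  have := bc_pos hd m
  have h : (0:ℝ) ≤ t ^ (2*m) := by rw [pow_mul]; positivity
  positivity

lemma summable_F {d : ℝ} (hd : 0 < d) (t : ℝ) :
    Summable (fun m : ℕ => bc d m * t ^ (2*m)) := by
  have h0 : (0:ℝ) < Real.Gamma (d+1) := Real.Gamma_pos_of_pos (by positivity)
  refine Summable.of_nonneg_of_le (term_nonneg hd t) (fun m => ?_)
    ((Real.summable_pow_div_factorial (t^2/4)).mul_left (1 / Real.Gamma (d+1)))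
  have h1 : bc d m * t ^ (2*m) ≤
      ((1 / Real.Gamma (d+1)) * ((1/4) ^ m / (Nat.factorial m : ℝ))) * t ^ (2*m) := by
    apply mul_le_mul_of_nonneg_right (bc_le hd m)
    rw [pow_mul]; positivity
  refine h1.trans (le_of_eq ?_)
  have h2 : (0:ℝ) < (Nat.factorial m : ℝ) := by exact_mod_cast Nat.factorial_pos m
  rw [pow_mul, div_pow, div_pow]
  field_simp
  ring

lemma summable_deriv {d : ℝ} (hd : 0 < d) {R : ℝ} (hR : 1 ≤ R) :
    Summable (fun m : ℕ => bc d m * (((2*m : ℕ):ℝ) * R ^ (2*m-1))) := by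
  have h0 : (0:ℝ) < Real.Gamma (d+1) := Real.Gamma_pos_of_pos (by positivity)
  have hR0 : (0:ℝ) < R := lt_of_lt_of_le one_pos hR
  refine Summable.of_nonneg_of_le (fun m => ?_) (fun m => ?_)
    ((Real.summable_pow_div_factorial (R^2/2)).mul_left (2 / Real.Gamma (d+1)))
  · have := bc_pos hd m
    positivity
  · have hbc := bc_le hd m
    have h2 : (0:ℝ) < (Nat.factorial m : ℝ) := by exact_mod_cast Nat.factorial_pos m
    have hm2 : ((2*m : ℕ):ℝ) ≤ 2 * 2^m := by
      have : (m:ℝ) ≤ 2^m := by exact_mod_cast (Nat.lt_two_pow_self (n := m)).le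
      push_cast
      nlinarith
    have hRp : R ^ (2*m-1) ≤ R ^ (2*m) := pow_le_pow_right₀ hR (Nat.sub_le _ _)
    have hbcp := bc_pos hd m
    calc bc d m * (((2*m : ℕ):ℝ) * R ^ (2*m-1))
        ≤ ((1 / Real.Gamma (d+1)) * ((1/4) ^ m / (Nat.factorial m : ℝ)))
            * ((2*2^m) * R^(2*m)) := by
          apply mul_le_mul hbc _ (by positivity) (by positivity)
          apply mul_le_mul hm2 hRp (by positivity) (by positivity)
      _ = (2 / Real.Gamma (d+1)) * ((R^2/2) ^ m / (Nat.factorial m : ℝ)) := by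
          rw [pow_mul, div_pow, div_pow]
          have h4 : (4:ℝ)^m = 2^m * 2^m := by rw [← mul_pow]; norm_num
          rw [h4]
          field_simp
          ring

lemma hasDerivAt_F {d : ℝ} (hd : 0 < d) (t : ℝ) : HasDerivAt (F d) (F' d t) t := by
  set R : ℝ := |t| + 1 with hRdef
  have hR1 : 1 ≤ R := by
    have := abs_nonneg t
    simp [hRdef]
  have hmem : t ∈ Metric.ball (0:ℝ) R := by
    simp [Real.dist_eq, hRdef]
  apply hasDerivAt_tsum_of_isPreconnected (summable_deriv hd hR1)
    Metric.isOpen_ball (convex_ball (0:ℝ) R).isPreconnected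
    (g' := fun m y => bc d m * (((2*m : ℕ):ℝ) * y ^ (2*m-1)))
    (fun m y _ => ((hasDerivAt_pow (2*m) y).const_mul (bc d m)))
    (fun m y hy => ?_) hmem (summable_F hd t) hmem
  have hy' : |y| ≤ R := by
    rw [Metric.mem_ball, Real.dist_eq, sub_zero] at hy
    exact hy.le
  have hbc := (bc_pos hd m).le
  have e : ‖bc d m * (((2*m : ℕ):ℝ) * y ^ (2*m-1))‖
      = bc d m * (((2*m : ℕ):ℝ) * |y| ^ (2*m-1)) := by
    rw [norm_mul, norm_mul, Real.norm_eq_abs, Real.norm_eq_abs, Real.norm_eq_abs,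
      abs_of_nonneg hbc, abs_of_nonneg (by positivity : (0:ℝ) ≤ ((2*m : ℕ):ℝ)), abs_pow]
  rw [e]
  have h1 : |y| ^ (2*m-1) ≤ R ^ (2*m-1) := pow_le_pow_left₀ (abs_nonneg y) hy' _
  have h2 : (0:ℝ) ≤ ((2*m : ℕ):ℝ) := by positivity
  exact mul_le_mul_of_nonneg_left (mul_le_mul_of_nonneg_left h1 h2) hbc

lemma F_pos {d : ℝ} (hd : 0 < d) (t : ℝ) : 0 < F d t := by
  refine Summable.tsum_pos (summable_F hd t) (term_nonneg hd t) 0 ?_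
  simpa using bc_pos hd 0

lemma summable_r {d : ℝ} (hd : 0 < d) {t : ℝ} (ht : 0 ≤ t) :
    Summable (fun m : ℕ => bc d m * (((2*m : ℕ):ℝ) * t ^ (2*m-1))) := by
  refine Summable.of_nonneg_of_le (fun m => ?_) (fun m => ?_)
    (summable_deriv hd (show (1:ℝ) ≤ t + 1 by linarith))
  · have := bc_pos hd m
    positivity
  · have := bc_pos hd m
    have h1 : t ^ (2*m-1) ≤ (t+1) ^ (2*m-1) :=
      pow_le_pow_left₀ ht (by linarith) _
    have h2 : (0:ℝ) ≤ ((2*m : ℕ):ℝ) := by positivity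
    exact mul_le_mul_of_nonneg_left (mul_le_mul_of_nonneg_left h1 h2) this.le

/-- The key analytic fact (equivalent to `I_{d+1} ≤ I_d`), proved via
the Cauchy–Schwarz inequality applied to the series coefficients. -/
lemma deriv_le {d : ℝ} (hd : 0 < d) {t : ℝ} (ht : 0 ≤ t) : F' d t ≤ F d t := by
  set f : ℕ → ℝ := fun m => bc d m * t ^ (2*m) with hf
  set g : ℕ → ℝ := fun m => bc d m * (4 * (m:ℝ)^2 * t ^ (2*m-2)) with hg
  set r : ℕ → ℝ := fun m => bc d m * (((2*m : ℕ):ℝ) * t ^ (2*m-1)) with hr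
  have hg_nonneg : ∀ m, 0 ≤ g m := by
    intro m
    have := bc_pos hd m
    simp only [hg]
    positivity
  have hf_nonneg : ∀ m, 0 ≤ f m := term_nonneg hd t
  have hr_nonneg : ∀ m, 0 ≤ r m := by
    intro m
    have := bc_pos hd m
    simp only [hr]
    positivity
  have hr_sq : ∀ m, r m ^ 2 = f m * g m := by
    intro m
    cases m with
    | zero => simp [hr, hf, hg]
    | succ k =>
      have e1 : 2*(k+1)-1 = 2*k+1 := by omega
      have e2 : 2*(k+1)-2 = 2*k := by omega
      have e3 : 2*(k+1) = 2*k+2 := by omega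
      simp only [hr, hf, hg, e1, e2, e3]
      push_cast
      ring
  have hg_succ : ∀ k : ℕ, g (k+1) ≤ f k := by
    intro k
    have h := bc_pos hd (k+1)
    have ht2 : (0:ℝ) ≤ t ^ (2*k) := by positivity
    have hkc : (0:ℝ) ≤ (k:ℝ) := k.cast_nonneg
    have e2 : 2*(k+1)-2 = 2*k := by omega
    have step : 4*((k:ℝ)+1)*((k:ℝ)+1) ≤ 4*((k:ℝ)+1)*((k:ℝ)+d+1) := by nlinarith
    calc g (k+1) = bc d (k+1) * (4*((k:ℝ)+1)*((k:ℝ)+1)) * t^(2*k) := by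
          simp only [hg, e2]; push_cast; ring
      _ ≤ bc d (k+1) * (4*((k:ℝ)+1)*((k:ℝ)+d+1)) * t^(2*k) :=
          mul_le_mul_of_nonneg_right (mul_le_mul_of_nonneg_left step h.le) ht2
      _ = f k := by rw [bc_succ hd k]
  have hsum_f : Summable f := summable_F hd t
  have hsum_g1 : Summable (fun k => g (k+1)) :=
    Summable.of_nonneg_of_le (fun k => hg_nonneg _) hg_succ hsum_f
  have hsum_g : Summable g := (summable_nat_add_iff 1).mp hsum_g1
  have htsum_g : ∑' m, g m ≤ F d t := by
    rw [Summable.tsum_eq_zero_add hsum_g]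
    have hg0 : g 0 = 0 := by simp [hg]
    rw [hg0, zero_add]
    exact Summable.tsum_le_tsum hg_succ hsum_g1 hsum_f
  have htsum_f : ∑' m, f m = F d t := rfl
  have hFpos := F_pos hd t
  have hfin : ∀ s : Finset ℕ, ∑ m ∈ s, r m ≤ F d t := by
    intro s
    have hcs := Finset.sum_sq_le_sum_mul_sum_of_sq_eq_mul s
      (fun i _ => hf_nonneg i) (fun i _ => hg_nonneg i) (fun i _ => hr_sq i)
    have hsf : ∑ m ∈ s, f m ≤ F d t := by
      rw [← htsum_f]; exact Summable.sum_le_tsum s (fun i _ => hf_nonneg i) hsum_f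
    have hsg : ∑ m ∈ s, g m ≤ F d t :=
      le_trans (Summable.sum_le_tsum s (fun i _ => hg_nonneg i) hsum_g) htsum_g
    have hsf0 : (0:ℝ) ≤ ∑ m ∈ s, f m := Finset.sum_nonneg (fun i _ => hf_nonneg i)
    have hsg0 : (0:ℝ) ≤ ∑ m ∈ s, g m := Finset.sum_nonneg (fun i _ => hg_nonneg i)
    have hsr0 : (0:ℝ) ≤ ∑ m ∈ s, r m := Finset.sum_nonneg (fun i _ => hr_nonneg i)
    nlinarith [hcs]
  exact Summable.tsum_le_of_sum_le (summable_r hd ht) hfin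

lemma F_ratio {d : ℝ} (hd : 0 < d) {x y : ℝ} (hx : 0 < x) (hxy : x ≤ y) :
    F d y ≤ Real.exp (y - x) * F d x := by
  have hφ : ∀ t : ℝ, HasDerivAt (fun u => Real.exp (-u) * F d u)
      (Real.exp (-t) * F' d t - Real.exp (-t) * F d t) t := by
    intro t
    have h1 : HasDerivAt (fun u : ℝ => Real.exp (-u)) (-Real.exp (-t)) t := by
      exact ((Real.hasDerivAt_exp (-t)).comp t (hasDerivAt_neg t)).congr_deriv (by ring)
    have h2 := h1.mul (hasDerivAt_F hd t)
    refine h2.congr_deriv ?_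
    ring
  have hFdiff : Differentiable ℝ (F d) := fun t => (hasDerivAt_F hd t).differentiableAt
  have hmono : AntitoneOn (fun u => Real.exp (-u) * F d u) (Set.Icc x y) := by
    apply antitoneOn_of_deriv_nonpos (convex_Icc x y)
    · exact ((Real.continuous_exp.comp continuous_neg).mul hFdiff.continuous).continuousOn
    · exact fun t _ => ((hφ t).differentiableAt).differentiableWithinAt
    · intro t ht
      rw [interior_Icc] at ht
      rw [(hφ t).deriv]
      have ht0 : (0:ℝ) ≤ t := (hx.trans ht.1).le
      have hle := deriv_le hd ht0
      have he : (0:ℝ) < Real.exp (-t) := Real.exp_pos _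
      nlinarith
  have h := hmono (Set.left_mem_Icc.mpr hxy) (Set.right_mem_Icc.mpr hxy) hxy
  have hey : (0:ℝ) < Real.exp y := Real.exp_pos y
  have hy1 : F d y = Real.exp y * (Real.exp (-y) * F d y) := by
    rw [← mul_assoc, ← Real.exp_add]
    simp
  rw [hy1]
  calc Real.exp y * (Real.exp (-y) * F d y) ≤ Real.exp y * (Real.exp (-x) * F d x) :=
        mul_le_mul_of_nonneg_left h hey.le
    _ = Real.exp (y - x) * F d x := by
        rw [← mul_assoc, ← Real.exp_add]
        ring_nf

lemma besselI_eq {d : ℝ} (hd : 0 < d) {t : ℝ} (ht : 0 < t) :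
    besselI d t = (t/2) ^ d * F d t := by
  have hhalf : (0:ℝ) < t/2 := by linarith
  have hterm : ∀ m : ℕ,
      (t / 2) ^ (2 * (m : ℝ) + d) / ((Nat.factorial m : ℝ) * Real.Gamma ((m : ℝ) + d + 1))
        = (t/2) ^ d * (bc d m * t ^ (2*m)) := by
    intro m
    have hG := gamma_pos hd m
    have hfac : (0:ℝ) < (Nat.factorial m : ℝ) := by exact_mod_cast Nat.factorial_pos m
    have e1 : (2 * (m:ℝ) + d) = ((2*m : ℕ):ℝ) + d := by push_cast; ring
    rw [e1, Real.rpow_add hhalf, Real.rpow_natCast]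
    have e2 : (t/2) ^ (2*m : ℕ) = t ^ (2*m) / 4 ^ m := by
      rw [div_pow]
      congr 1
      rw [pow_mul]
      norm_num
    rw [e2]
    unfold bc
    field_simp
  unfold besselI F
  rw [tsum_congr hterm, tsum_mul_left]

end Stmt14Aux

open Stmt14Aux in
/-- Lemma F.6: for real `d > 1` and `0 < x ≤ y`,
`I_d(y)/I_d(x) ≤ (y/x)^d e^{y-x}`. -/
theorem stmt_14 (d : ℝ) (hd : 1 < d) (x y : ℝ) (hx : 0 < x) (hxy : x ≤ y) :
    besselI d y / besselI d x ≤ (y / x) ^ d * Real.exp (y - x) := by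
  have hd0 : 0 < d := lt_trans one_pos hd
  have hy : 0 < y := lt_of_lt_of_le hx hxy
  have hFx := F_pos hd0 x
  have hFy := F_pos hd0 y
  have hpx : (0:ℝ) < (x/2) ^ d := Real.rpow_pos_of_pos (by linarith) d
  have hpy : (0:ℝ) < (y/2) ^ d := Real.rpow_pos_of_pos (by linarith) d
  rw [besselI_eq hd0 hx, besselI_eq hd0 hy]
  rw [div_le_iff₀ (by positivity)]
  have hkey := F_ratio hd0 hx hxy
  have hrw : (y/x) ^ d * (x/2) ^ d = (y/2) ^ d := by
    rw [← Real.mul_rpow (by positivity) (by positivity)]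
    congr 1
    field_simp
  calc (y/2) ^ d * F d y ≤ (y/2) ^ d * (Real.exp (y - x) * F d x) :=
        mul_le_mul_of_nonneg_left hkey hpy.le
    _ = (y / x) ^ d * Real.exp (y - x) * ((x/2) ^ d * F d x) := by
        rw [← hrw]; ring
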